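/- Let G be a finite simple graph and v an internal vertex of G such that some clique of G of maximum size ω(G) contains v. Then every clique of G containing v is a proper subset of N_G(v) ∪ {v}, and ω(G_v) ≥ deg_G(v) + 1 > ω(G). -/

import Mathlib

/-- A maximal clique of a simple graph: a clique that is maximal under inclusion. -/
def MaxClq {V : Type*} (G : SimpleGraph V) (s : Set V) : Prop :=
  G.IsClique s ∧ ∀ t : Set V, G.IsClique t → s ⊆ t → s = t

/-- An internal vertex: a vertex lying in at least two (distinct) maximal cliques. -/
def InternalVtx {V : Type*} (G : SimpleGraph V) (v : V) : Prop :=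
  ∃ s t : Set V, MaxClq G s ∧ MaxClq G t ∧ s ≠ t ∧ v ∈ s ∧ v ∈ t

/-- `iv G`: the number of internal vertices of `G`. -/
noncomputable def ivNum {V : Type*} (G : SimpleGraph V) : ℕ :=
  {v : V | InternalVtx G v}.ncard

/-- `c G`: the number of connected components of `G`. -/
noncomputable def compNum {V : Type*} (G : SimpleGraph V) : ℕ :=
  Nat.card G.ConnectedComponent

/-- `𝒞 G`: the number of maximal cliques of `G`. -/
noncomputable def maxClqNum {V : Type*} (G : SimpleGraph V) : ℕ :=
  {s : Set V | MaxClq G s}.ncard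

/-- `ω G`: the clique number of `G`, the maximum size of a clique. -/
noncomputable def clqNum {V : Type*} (G : SimpleGraph V) : ℕ :=
  sSup {k : ℕ | ∃ s : Set V, G.IsClique s ∧ s.ncard = k}

/-- A set of edges of `G` is clique-disjoint if no two distinct edges of it are both
contained in a single clique of `G`. -/
def CliqueDisjointEdges {V : Type*} (G : SimpleGraph V) (E : Set (Sym2 V)) : Prop :=
  E ⊆ G.edgeSet ∧ ∀ e ∈ E, ∀ f ∈ E, e ≠ f →
    ¬ ∃ s : Set V, G.IsClique s ∧ (∀ x ∈ e, x ∈ s) ∧ (∀ x ∈ f, x ∈ s)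

/-- `η G`: the maximum cardinality of a clique-disjoint set of edges of `G`. -/
noncomputable def etaNum {V : Type*} (G : SimpleGraph V) : ℕ :=
  sSup {k : ℕ | ∃ E : Set (Sym2 V), CliqueDisjointEdges G E ∧ E.ncard = k}

/-- `G_v`: the graph on the same vertex set as `G` whose edges are those of `G` together
with all edges between distinct neighbours of `v`. -/
def addNbrEdges {V : Type*} (G : SimpleGraph V) (v : V) : SimpleGraph V where
  Adj a b := G.Adj a b ∨ (a ≠ b ∧ G.Adj v a ∧ G.Adj v b)
  symm := by
    constructor
    intro a b h
    rcases h with h | ⟨hne, h1, h2⟩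
    · exact Or.inl h.symm
    · exact Or.inr ⟨hne.symm, h2, h1⟩
  loopless := by
    constructor
    intro a h
    rcases h with h | ⟨hne, _, _⟩
    · exact G.irrefl h
    · exact hne rfl

/-!
Every clique through `v` lies in the closed neighbourhood `N[v] = N(v) ∪ {v}`. If `N[v]` were a
clique, every maximal clique through `v` would equal it, so `v` could not be internal; hence
cliques through `v` are proper subsets of `N[v]`, and a maximum clique through `v` has fewer than
`deg v + 1` vertices. On the other hand `G_v` is built exactly so that `N[v]` is a clique of it.
-/

namespace SimpleGraph

variable {V : Type*} {G : SimpleGraph V} {v : V}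

lemma subset_insert_neighborSet_of_isClique {t : Set V} (ht : G.IsClique t) (hvt : v ∈ t) :
    t ⊆ insert v (G.neighborSet v) := by
  intro u hu
  by_cases huv : u = v
  · exact huv ▸ Set.mem_insert u _
  · exact Set.mem_insert_of_mem _ (ht hvt hu (Ne.symm huv))

lemma isClique_addNbrEdges_insert_neighborSet :
    (addNbrEdges G v).IsClique (insert v (G.neighborSet v)) := by
  rintro a (rfl | ha) b (rfl | hb) hab
  · exact absurd rfl hab
  · exact Or.inl hb
  · exact Or.inl ha.symm
  · exact Or.inr ⟨hab, ha, hb⟩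

lemma ncard_insert_neighborSet [Finite V] :
    (insert v (G.neighborSet v)).ncard = (G.neighborSet v).ncard + 1 :=
  Set.ncard_insert_of_notMem G.notMem_neighborSet_self

lemma IsClique.ncard_le_clqNum [Finite V] {s : Set V} (hs : G.IsClique s) :
    s.ncard ≤ clqNum G := by
  refine le_csSup ⟨Nat.card V, ?_⟩ ⟨s, hs, rfl⟩
  rintro k ⟨u, -, rfl⟩
  exact Set.ncard_univ V ▸ Set.ncard_le_ncard (Set.subset_univ u)

end SimpleGraph

open SimpleGraph

section

variable {V : Type*} {G : SimpleGraph V} {v : V}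

lemma InternalVtx.not_isClique_insert_neighborSet (hv : InternalVtx G v) :
    ¬ G.IsClique (insert v (G.neighborSet v)) := by
  intro hclique
  obtain ⟨s, t, hs, ht, hst, hvs, hvt⟩ := hv
  have hs_eq := hs.2 _ hclique (subset_insert_neighborSet_of_isClique hs.1 hvs)
  have ht_eq := ht.2 _ hclique (subset_insert_neighborSet_of_isClique ht.1 hvt)
  exact hst (hs_eq.trans ht_eq.symm)

lemma InternalVtx.ssubset_insert_neighborSet (hv : InternalVtx G v) {t : Set V}
    (ht : G.IsClique t) (hvt : v ∈ t) : t ⊂ insert v (G.neighborSet v) := by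
  refine (subset_insert_neighborSet_of_isClique ht hvt).ssubset_of_ne ?_
  rintro rfl
  exact hv.not_isClique_insert_neighborSet ht

end

/-- if `v` is an internal vertex of `G` contained in some clique of maximum
size `ω(G)`, then every clique of `G` containing `v` is a proper subset of `N_G(v) ∪ {v}`,
and `ω(G_v) ≥ deg_G(v) + 1 > ω(G)`. -/
theorem stmt12 {V : Type*} [Finite V] (G : SimpleGraph V) (v : V)
    (hv : InternalVtx G v)
    (hmax : ∃ s : Set V, G.IsClique s ∧ s.ncard = clqNum G ∧ v ∈ s) :
    (∀ t : Set V, G.IsClique t → v ∈ t → t ⊂ insert v (G.neighborSet v)) ∧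
    (G.neighborSet v).ncard + 1 ≤ clqNum (addNbrEdges G v) ∧
    clqNum G < (G.neighborSet v).ncard + 1 := by
  refine ⟨fun t ht hvt => hv.ssubset_insert_neighborSet ht hvt, ?_, ?_⟩
  · rw [← ncard_insert_neighborSet]
    exact isClique_addNbrEdges_insert_neighborSet.ncard_le_clqNum
  · obtain ⟨s, hs, hs_card, hvs⟩ := hmax
    rw [← hs_card, ← ncard_insert_neighborSet]
    exact Set.ncard_lt_ncard (hv.ssubset_insert_neighborSet hs hvs)
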